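/- arXiv:2102.06579 — 3 statements merged into one kernel-verified Lean document; each statement's English description precedes it below -/
import Mathlib

section
/- Let D = {y ∈ ℝ^d : φ(y) < 0} be a bounded open set with φ ∈ C², ∇φ nonvanishing on ∂D, and suppose D is strictly star-shaped with respect to 0, i.e. inf_{y ∈ ∂D} (y/|y|) · (∇φ(y)/|∇φ(y)|) > 0. Then for sufficiently small ε > 0, taking C = B_ε(0) and φ_C(y) = ρ_ε(|y| - ε), where ρ_ε : ℝ → ℝ is a C² convex increasing function with ρ_ε(x) = -ε/2 for x < -ε and ρ_ε(x) = x for x > 0, one has inf_{y ∈ ∂D} ∇φ_C(y) · (∇φ(y)/|∇φ(y)|) > 0. -/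
open Set
open scoped RealInnerProductSpace

lemma hasGradientAt_norm' {E : Type*} [NormedAddCommGroup E] [InnerProductSpace ℝ E] [CompleteSpace E]
    {y : E} (hy : y ≠ 0) : HasGradientAt (fun z => ‖z‖) (‖y‖⁻¹ • y) y := by
  have hny : (0:ℝ) < ‖y‖ := norm_pos_iff.mpr hy
  have hsq : HasFDerivAt (fun z : E => ‖z‖ ^ 2) (2 • (innerSL ℝ y)) y :=
    (hasStrictFDerivAt_norm_sq y).hasFDerivAt
  have hsqrt : HasDerivAt Real.sqrt (1 / (2 * Real.sqrt (‖y‖ ^ 2))) (‖y‖ ^ 2) :=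
    Real.hasDerivAt_sqrt (by positivity)
  have hcomp := hsqrt.comp_hasFDerivAt y hsq
  have heq : (fun z : E => Real.sqrt (‖z‖ ^ 2)) = fun z : E => ‖z‖ := by
    funext z; rw [Real.sqrt_sq (norm_nonneg z)]
  rw [Function.comp_def, heq] at hcomp
  rw [hasGradientAt_iff_hasFDerivAt]
  convert hcomp using 1
  · rfl
  ext v
  rw [Real.sqrt_sq hny.le]
  simp only [InnerProductSpace.toDual_apply_apply, ContinuousLinearMap.coe_smul',
    Pi.smul_apply, ContinuousLinearMap.smul_apply, innerSL_apply_apply, real_inner_smul_left,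
    smul_eq_mul]
  ring

/-- A strictly star-shaped (w.r.t. 0) bounded C² domain satisfies the weak star-shape
property, with `C = B_ε(0)` and `φ_C(y) = ρ_ε(‖y‖ - ε)`. -/
theorem stmt_3 (d : ℕ) (φ : EuclideanSpace ℝ (Fin d) → ℝ)
    (D : Set (EuclideanSpace ℝ (Fin d)))
    (hD : D = {y | φ y < 0})
    (hbdd : Bornology.IsBounded D)
    (hφ : ContDiff ℝ 2 φ)
    (h0 : (0 : EuclideanSpace ℝ (Fin d)) ∈ D)
    (hgrad : ∀ y ∈ frontier D, gradient φ y ≠ 0)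
    (hstar : ∃ c > (0:ℝ), ∀ y ∈ frontier D,
      (⟪‖y‖⁻¹ • y, ‖gradient φ y‖⁻¹ • gradient φ y⟫) ≥ c) :
    ∃ ε₀ > (0:ℝ), ∀ ε : ℝ, 0 < ε → ε < ε₀ → ∀ ρ : ℝ → ℝ,
      ContDiff ℝ 2 ρ → ConvexOn ℝ Set.univ ρ → Monotone ρ →
      (∀ x < -ε, ρ x = -ε/2) → (∀ x > 0, ρ x = x) →
      ∃ c' > (0:ℝ), ∀ y ∈ frontier D,
        (⟪gradient (fun z => ρ (‖z‖ - ε)) y, ‖gradient φ y‖⁻¹ • gradient φ y⟫) ≥ c' := by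
  -- D is open
  have hDopen : IsOpen D := by
    rw [hD]
    exact isOpen_lt (hφ.continuous) continuous_const
  -- 0 is not in the frontier
  have h0f : (0 : EuclideanSpace ℝ (Fin d)) ∉ frontier D := by
    rw [hDopen.frontier_eq]
    exact fun h => h.2 h0

  -- choose ε₀
  by_cases hfe : (frontier D).Nonempty
  · have hcl : IsClosed (frontier D) := isClosed_frontier
    have hpos : 0 < Metric.infDist 0 (frontier D) := by
      exact (hcl.notMem_iff_infDist_pos hfe).mp h0f
    refine ⟨Metric.infDist 0 (frontier D), hpos, ?_⟩
    intro ε hε hεlt ρ hρ _ _ _ hρid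
    obtain ⟨c, hc, hcstar⟩ := hstar
    refine ⟨c, hc, ?_⟩
    intro y hy
    have hylb : Metric.infDist 0 (frontier D) ≤ ‖y‖ := by
      simpa [dist_eq_norm] using Metric.infDist_le_dist_of_mem (x := (0:EuclideanSpace ℝ (Fin d))) hy
    have hyε : ε < ‖y‖ := lt_of_lt_of_le hεlt hylb
    have hy0 : y ≠ 0 := by
      intro h; rw [h, norm_zero] at hyε; linarith
    -- gradient of the composite equals ‖y‖⁻¹ • y
    have hg : HasGradientAt (fun z : EuclideanSpace ℝ (Fin d) => ‖z‖ - ε) (‖y‖⁻¹ • y) y := by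
      rw [hasGradientAt_iff_hasFDerivAt] at *
      exact (hasGradientAt_norm' hy0).hasFDerivAt.sub_const ε
    have hopen : IsOpen {z : EuclideanSpace ℝ (Fin d) | ε < ‖z‖} :=
      isOpen_lt continuous_const continuous_norm
    have hmem : {z : EuclideanSpace ℝ (Fin d) | ε < ‖z‖} ∈ nhds y := hopen.mem_nhds hyε
    have hev : (fun z : EuclideanSpace ℝ (Fin d) => ρ (‖z‖ - ε))
        =ᶠ[nhds y] (fun z => ‖z‖ - ε) := by
      filter_upwards [hmem] with z hz
      exact hρid _ (sub_pos.mpr hz)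
    have hg2 : HasGradientAt (fun z : EuclideanSpace ℝ (Fin d) => ρ (‖z‖ - ε)) (‖y‖⁻¹ • y) y :=
      hg.congr_of_eventuallyEq hev
    rw [hg2.gradient]
    exact hcstar y hy
  · exact ⟨1, one_pos, fun ε _ _ ρ _ _ _ _ _ =>
      ⟨1, one_pos, fun y hy => absurd ⟨y, hy⟩ hfe⟩⟩
end

section
/- Let C ⊆ ℝ^d be an open bounded convex set with 0 ∈ C, defined by a C² convex function φ_C with C = {φ_C < 0}, φ_C ≥ φ_C(0), and φ_C(y) = dist(y, cl(C)) for y ∉ C. Let D ⊇ cl(C) be bounded. Then inf_{y ∈ ℝ^d \ D, |y| ≤ R} ∇φ_C(y) · (y/|y|) > 0 for every R > sup_{x∈D}|x|; in particular, on any bounded set of points outside D, the radial derivative of φ_C is uniformly bounded below by a positive constant. -/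
open Set
open scoped RealInnerProductSpace

/-- For a convex C² defining function `φ_C` of a convex set `C ∋ 0`, equal to the
distance to `cl C` outside `C`, the radial derivative of `φ_C` is uniformly positive
on bounded sets of points outside any bounded `D ⊇ cl C`. -/
theorem stmt_4 (d : ℕ) (φC : EuclideanSpace ℝ (Fin d) → ℝ)
    (C D : Set (EuclideanSpace ℝ (Fin d)))
    (hC : C = {y | φC y < 0})
    (h0 : (0 : EuclideanSpace ℝ (Fin d)) ∈ C)
    (hconv : ConvexOn ℝ Set.univ φC)
    (hsm : ContDiff ℝ 2 φC)
    (hmin : ∀ y, φC 0 ≤ φC y)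
    (hdist : ∀ y ∉ C, φC y = Metric.infDist y (closure C))
    (hCD : closure C ⊆ D)
    (hbdd : Bornology.IsBounded D) :
    ∀ R : ℝ, (∀ x ∈ D, ‖x‖ < R) →
      ∃ c > (0:ℝ), ∀ y ∉ D, ‖y‖ ≤ R →
        (⟪gradient φC y, ‖y‖⁻¹ • y⟫) ≥ c := by
  intro R hR
  have hφ0 : φC 0 < 0 := by rw [hC] at h0; exact h0
  have h0D : (0 : EuclideanSpace ℝ (Fin d)) ∈ D := hCD (subset_closure h0)
  have hRpos : 0 < R := by simpa using hR 0 h0D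
  refine ⟨-φC 0 / R, div_pos (by linarith) hRpos, ?_⟩
  intro y hyD hyR
  have hyC : y ∉ C := fun h => hyD (hCD (subset_closure h))
  have hφy : 0 ≤ φC y := by
    rw [hdist y hyC]; exact Metric.infDist_nonneg
  have hy0 : y ≠ 0 := fun h => hyD (h ▸ h0D)
  have hyn : (0:ℝ) < ‖y‖ := norm_pos_iff.mpr hy0
  -- differentiability
  have hdiff : DifferentiableAt ℝ φC y :=
    (hsm.differentiable (by norm_num)).differentiableAt
  have hgrad : HasGradientAt φC (gradient φC y) y := hdiff.hasGradientAt
  have hfder : HasFDerivAt φC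
      ((InnerProductSpace.toDual ℝ _) (gradient φC y)) y := by
    rwa [hasGradientAt_iff_hasFDerivAt] at hgrad
  -- the function g t = φC (t • y) is convex and has derivative ⟪∇φ y, y⟫ at 1
  have hline : HasDerivAt (fun t : ℝ => t • y) y 1 := by
    simpa using (hasDerivAt_id (1:ℝ)).smul_const y
  have hg : HasDerivAt (fun t : ℝ => φC (t • y))
      (⟪gradient φC y, y⟫) 1 := by
    have hfder' : HasFDerivAt φC
        ((InnerProductSpace.toDual ℝ _) (gradient φC y)) ((1:ℝ) • y) := by
      simpa using hfder
    have := hfder'.comp_hasDerivAt 1 hline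
    simpa [InnerProductSpace.toDual_apply_apply, Function.comp_def] using this
  have hgconv : ConvexOn ℝ Set.univ (fun t : ℝ => φC (t • y)) := by
    have := hconv.comp_affineMap (AffineMap.lineMap (0 : EuclideanSpace ℝ (Fin d)) y)
    have heq : (fun t : ℝ => φC (t • y)) =
        φC ∘ (AffineMap.lineMap (0 : EuclideanSpace ℝ (Fin d)) y) := by
      funext t; simp [AffineMap.lineMap_apply]
    rw [heq]
    simpa using this
  have hslope : (φC ((1:ℝ) • y) - φC ((0:ℝ) • y)) / (1 - 0) ≤ ⟪gradient φC y, y⟫ := by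
    have := hgconv.slope_le_of_hasDerivAt (x := (0:ℝ)) (y := (1:ℝ))
      (mem_univ _) (mem_univ _) one_pos hg
    simpa [slope_def_field] using this
  have hkey : -φC 0 ≤ ⟪gradient φC y, y⟫ := by
    have h1 : φC ((1:ℝ) • y) = φC y := by norm_num
    have h2 : φC ((0:ℝ) • y) = φC 0 := by norm_num
    rw [h1, h2] at hslope
    nlinarith
  have : ⟪gradient φC y, ‖y‖⁻¹ • y⟫ = ‖y‖⁻¹ * ⟪gradient φC y, y⟫ := by
    rw [real_inner_smul_right]
  rw [this]
  rw [ge_iff_le, div_le_iff₀ hRpos]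
  calc -φC 0 ≤ ⟪gradient φC y, y⟫ := hkey
    _ = ‖y‖ * (‖y‖⁻¹ * ⟪gradient φC y, y⟫) := by field_simp
    _ ≤ R * (‖y‖⁻¹ * ⟪gradient φC y, y⟫) := by
        have hpos : 0 ≤ ‖y‖⁻¹ * ⟪gradient φC y, y⟫ :=
          mul_nonneg (inv_nonneg.mpr hyn.le) (by linarith)
        exact mul_le_mul_of_nonneg_right hyR hpos
    _ = (‖y‖⁻¹ * ⟪gradient φC y, y⟫) * R := mul_comm _ _
end

section
/- Let ψ̂ : ℝ^d → ℝ be C² with locally Lipschitz second derivatives, and let ρ : ℝ → ℝ be a smooth nondecreasing function with ρ(x) = -1 for x ≤ -1 and ρ(x) = x for x ≥ 0. Define g^m(y) = m^{-2} ρ(m ψ̂(y))². Then: (i) g^m(y), ∇g^m(y), ∇²g^m(y) converge to 0 as m → ∞ at every point y with ψ̂(y) < 0; (ii) g^m(y) = ψ̂(y)², ∇g^m(y) = ∇(ψ̂²)(y), ∇²g^m(y) = ∇²(ψ̂²)(y) for all y with ψ̂(y) ≥ 0 and all m ≥ 1; (iii) |∇g^m| and |∇²g^m| are bounded on compact sets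 uniformly in m. -/
open Set Filter InnerProductSpace

section Aux

/-- If a continuous function equals `c` strictly to the right of `t₀`, it equals `c` at `t₀`
as well (and hence on the closed ray). -/
lemma auxRight {f : ℝ → ℝ} (hf : Continuous f) {c t₀ : ℝ} (h : ∀ t > t₀, f t = c) :
    ∀ t ≥ t₀, f t = c := by
  intro t ht
  rcases eq_or_lt_of_le ht with heq | h'
  · rw [← heq]
    have h1 : Tendsto f (nhdsWithin t₀ (Ioi t₀)) (nhds (f t₀)) :=
      (hf.continuousAt).tendsto.mono_left nhdsWithin_le_nhds
    have h2 : Tendsto f (nhdsWithin t₀ (Ioi t₀)) (nhds c) := by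
      refine Tendsto.congr' ?_ tendsto_const_nhds
      filter_upwards [self_mem_nhdsWithin] with s hs
      exact (h s hs).symm
    exact tendsto_nhds_unique h1 h2
  · exact h t h'

lemma auxLeft {f : ℝ → ℝ} (hf : Continuous f) {c t₀ : ℝ} (h : ∀ t < t₀, f t = c) :
    ∀ t ≤ t₀, f t = c := by
  intro t ht
  rcases eq_or_lt_of_le ht with heq | h'
  · rw [heq]
    have h1 : Tendsto f (nhdsWithin t₀ (Iio t₀)) (nhds (f t₀)) :=
      (hf.continuousAt).tendsto.mono_left nhdsWithin_le_nhds
    have h2 : Tendsto f (nhdsWithin t₀ (Iio t₀)) (nhds c) := by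
      refine Tendsto.congr' ?_ tendsto_const_nhds
      filter_upwards [self_mem_nhdsWithin] with s hs
      exact (h s hs).symm
    exact tendsto_nhds_unique h1 h2
  · exact h t h'

variable {d : ℕ}

/-- Smoothness of the gradient of a `C²` function. -/
lemma gradContDiff (ψ : EuclideanSpace ℝ (Fin d) → ℝ) (hψ : ContDiff ℝ 2 ψ) :
    ContDiff ℝ 1 (gradient ψ) := by
  have h1 : ContDiff ℝ 1 (fderiv ℝ ψ) := hψ.fderiv_right (by norm_num)
  exact (toDual ℝ (EuclideanSpace ℝ (Fin d))).symm.contDiff.comp h1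

/-- First derivative (gradient) of `x ↦ b σ(ψ x)²`. -/
theorem gradA (ψ : EuclideanSpace ℝ (Fin d) → ℝ) (hψ : ContDiff ℝ 2 ψ)
    (σ : ℝ → ℝ) (hσ : ContDiff ℝ (⊤:ℕ∞) σ) (b : ℝ) (y : EuclideanSpace ℝ (Fin d)) :
    HasGradientAt (fun x => b * (σ (ψ x))^2)
      ((2 * b * σ (ψ y) * deriv σ (ψ y)) • gradient ψ y) y := by
  have hψd : DifferentiableAt ℝ ψ y := (hψ.differentiable (by norm_num)).differentiableAt
  have hG : HasGradientAt ψ (gradient ψ y) y := hψd.hasGradientAt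
  have hF : HasFDerivAt ψ (toDual ℝ (EuclideanSpace ℝ (Fin d)) (gradient ψ y)) y :=
    hG.hasFDerivAt
  have hσd : HasDerivAt σ (deriv σ (ψ y)) (ψ y) :=
    ((hσ.differentiable (by simp)).differentiableAt).hasDerivAt
  have h1 : HasFDerivAt (fun x => σ (ψ x))
      (deriv σ (ψ y) • (toDual ℝ (EuclideanSpace ℝ (Fin d)) (gradient ψ y))) y :=
    hσd.comp_hasFDerivAt y hF
  have h2 := (h1.mul h1).const_mul b
  have h3 : HasFDerivAt (fun x => b * (σ (ψ x))^2)
      (toDual ℝ (EuclideanSpace ℝ (Fin d))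
        ((2 * b * σ (ψ y) * deriv σ (ψ y)) • gradient ψ y)) y := by
    have heq : (fun x => b * (σ (ψ x))^2) = (fun x => b * (σ (ψ x) * σ (ψ x))) := by
      funext x; ring
    rw [heq]
    refine h2.congr_fderiv ?_
    rw [map_smul]
    simp only [smul_smul, smul_add, ← add_smul]
    congr 1
    ring
  have := h3.hasGradientAt
  rwa [LinearIsometryEquiv.symm_apply_apply] at this

/-- Second derivative of `x ↦ b σ(ψ x)²`. -/
theorem gradB (ψ : EuclideanSpace ℝ (Fin d) → ℝ) (hψ : ContDiff ℝ 2 ψ)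
    (σ : ℝ → ℝ) (hσ : ContDiff ℝ (⊤:ℕ∞) σ) (b : ℝ) (y : EuclideanSpace ℝ (Fin d)) :
    fderiv ℝ (gradient (fun x => b * (σ (ψ x))^2)) y
      = (2 * b * ((deriv σ (ψ y))^2 + σ (ψ y) * deriv (deriv σ) (ψ y)))
          • ((fderiv ℝ ψ y).smulRight (gradient ψ y))
        + (2 * b * σ (ψ y) * deriv σ (ψ y)) • fderiv ℝ (gradient ψ) y := by
  have hgradeq : gradient (fun x => b * (σ (ψ x))^2)
      = fun x => (2 * b * σ (ψ x) * deriv σ (ψ x)) • gradient ψ x := by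
    funext x; exact (gradA ψ hψ σ hσ b x).gradient
  rw [hgradeq]
  have hgs : ContDiff ℝ 1 (gradient ψ) := gradContDiff ψ hψ
  have hGd : HasFDerivAt (gradient ψ) (fderiv ℝ (gradient ψ) y) y :=
    ((hgs.differentiable one_ne_zero).differentiableAt).hasFDerivAt
  have hψd : HasFDerivAt ψ (fderiv ℝ ψ y) y :=
    ((hψ.differentiable (by norm_num)).differentiableAt).hasFDerivAt
  have hσ1 : HasDerivAt σ (deriv σ (ψ y)) (ψ y) :=
    ((hσ.differentiable (by simp)).differentiableAt).hasDerivAt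
  have hσ2 : HasDerivAt (deriv σ) (deriv (deriv σ) (ψ y)) (ψ y) := by
    have : Differentiable ℝ (deriv σ) :=
      (contDiff_infty_iff_deriv.mp hσ).2.differentiable (by simp)
    exact (this.differentiableAt).hasDerivAt
  have hmul : HasDerivAt (fun s => 2 * b * σ s * deriv σ s)
      (2 * b * ((deriv σ (ψ y))^2 + σ (ψ y) * deriv (deriv σ) (ψ y))) (ψ y) := by
    have := (hσ1.const_mul (2*b)).mul hσ2
    refine this.congr_deriv ?_
    ring
  have hh : HasFDerivAt (fun x => 2 * b * σ (ψ x) * deriv σ (ψ x))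
      ((2 * b * ((deriv σ (ψ y))^2 + σ (ψ y) * deriv (deriv σ) (ψ y))) • fderiv ℝ ψ y) y :=
    hmul.comp_hasFDerivAt y hψd
  have hsmul : HasFDerivAt (fun x => (2 * b * σ (ψ x) * deriv σ (ψ x)) • gradient ψ x) _ y :=
    hh.smul hGd
  rw [hsmul.fderiv]
  rw [add_comm]
  congr 1
  ext v
  simp [ContinuousLinearMap.smulRight_apply, smul_smul, mul_comm]

end Aux

set_option maxHeartbeats 1600000 in
/-- The smoothing construction `g^m(y) = m⁻² ρ(m ψ̂(y))²` approximating `(ψ̂⁺)²`: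
convergence of the first two derivatives to 0 where `ψ̂ < 0`, exact agreement with
`ψ̂²` where `ψ̂ ≥ 0`, and local uniform boundedness of the derivatives in `m`. -/
theorem stmt_7 (d : ℕ) (ψ : EuclideanSpace ℝ (Fin d) → ℝ) (ρ : ℝ → ℝ)
    (hψ : ContDiff ℝ 2 ψ)
    (hψlip : LocallyLipschitz (fun y => fderiv ℝ (gradient ψ) y))
    (hρ : ContDiff ℝ (⊤ : ℕ∞) ρ) (hρmono : Monotone ρ)
    (hρ1 : ∀ x ≤ (-1:ℝ), ρ x = -1) (hρ2 : ∀ x ≥ (0:ℝ), ρ x = x)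
    (g : ℕ → EuclideanSpace ℝ (Fin d) → ℝ)
    (hg : ∀ m y, g m y = ((m:ℝ))⁻¹^2 * (ρ ((m:ℝ) * ψ y))^2) :
    (∀ y, ψ y < 0 →
      Tendsto (fun m => g m y) atTop (nhds 0) ∧
      Tendsto (fun m => gradient (g m) y) atTop (nhds 0) ∧
      Tendsto (fun m => fderiv ℝ (gradient (g m)) y) atTop (nhds 0)) ∧
    (∀ m : ℕ, 1 ≤ m → ∀ y, 0 ≤ ψ y →
      g m y = (ψ y)^2 ∧
      gradient (g m) y = gradient (fun x => (ψ x)^2) y ∧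
      fderiv ℝ (gradient (g m)) y = fderiv ℝ (gradient (fun x => (ψ x)^2)) y) ∧
    (∀ K : Set (EuclideanSpace ℝ (Fin d)), IsCompact K → ∃ M : ℝ, ∀ m : ℕ, 1 ≤ m →
      ∀ y ∈ K, ‖gradient (g m) y‖ ≤ M ∧ ‖fderiv ℝ (gradient (g m)) y‖ ≤ M) := by
  have hρ' : ContDiff ℝ (⊤:ℕ∞) ρ := hρ.of_le (by simp)
  have hρc1 : Continuous (deriv ρ) := hρ'.continuous_deriv (by exact_mod_cast le_top)
  have hρd2 : ContDiff ℝ (⊤:ℕ∞) (deriv ρ) := (contDiff_infty_iff_deriv.mp hρ').2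
  have hρc2 : Continuous (deriv (deriv ρ)) := hρd2.continuous_deriv (by exact_mod_cast le_top)
  -- pointwise facts about deriv ρ
  have hd1 : ∀ t > (0:ℝ), deriv ρ t = 1 := by
    intro t ht
    have he : ρ =ᶠ[nhds t] id := by
      filter_upwards [Ioi_mem_nhds ht] with s hs
      exact hρ2 s (le_of_lt hs)
    rw [he.deriv_eq, deriv_id]
  have hd1' : ∀ t ≥ (0:ℝ), deriv ρ t = 1 := auxRight hρc1 hd1
  have hd2 : ∀ t > (0:ℝ), deriv (deriv ρ) t = 0 := by
    intro t ht
    have he : deriv ρ =ᶠ[nhds t] fun _ => (1:ℝ) := by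
      filter_upwards [Ioi_mem_nhds ht] with s hs
      exact hd1 s hs
    rw [he.deriv_eq, deriv_const]
  have hd2' : ∀ t ≥ (0:ℝ), deriv (deriv ρ) t = 0 := auxRight hρc2 hd2
  have hd3 : ∀ t < (-1:ℝ), deriv ρ t = 0 := by
    intro t ht
    have he : ρ =ᶠ[nhds t] fun _ => (-1:ℝ) := by
      filter_upwards [Iio_mem_nhds ht] with s hs
      exact hρ1 s (le_of_lt hs)
    rw [he.deriv_eq, deriv_const]
  have hd3' : ∀ t ≤ (-1:ℝ), deriv ρ t = 0 := auxLeft hρc1 hd3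
  have hd4 : ∀ t < (-1:ℝ), deriv (deriv ρ) t = 0 := by
    intro t ht
    have he : deriv ρ =ᶠ[nhds t] fun _ => (0:ℝ) := by
      filter_upwards [Iio_mem_nhds ht] with s hs
      exact hd3 s hs
    rw [he.deriv_eq, deriv_const]
  have hd4' : ∀ t ≤ (-1:ℝ), deriv (deriv ρ) t = 0 := auxLeft hρc2 hd4
  have hval : ∀ t ≤ (0:ℝ), -1 ≤ ρ t ∧ ρ t ≤ 0 := by
    intro t ht
    constructor
    · by_cases h : t ≤ -1
      · rw [hρ1 t h]
      · have := hρmono (le_of_not_ge h : (-1:ℝ) ≤ t)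
        rwa [hρ1 (-1) le_rfl] at this
    · have := hρmono ht
      rwa [hρ2 0 le_rfl] at this
  -- the scaled functions σₘ
  set σm : ℕ → ℝ → ℝ := fun m t => ρ ((m:ℝ) * t) with hσm_def
  have hσm : ∀ m : ℕ, ContDiff ℝ (⊤:ℕ∞) (σm m) := fun m =>
    hρ'.comp (contDiff_const.mul contDiff_id)
  have hlin : ∀ m : ℕ, ∀ t : ℝ, HasDerivAt (fun s => (m:ℝ) * s) (m:ℝ) t := by
    intro m t
    simpa using (hasDerivAt_id t).const_mul (m:ℝ)
  have hρdiff : Differentiable ℝ ρ := hρ'.differentiable (by simp)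
  have hρ2diff : Differentiable ℝ (deriv ρ) := hρd2.differentiable (by simp)
  have hdσm : ∀ m : ℕ, deriv (σm m) = fun t => deriv ρ ((m:ℝ) * t) * (m:ℝ) := by
    intro m
    funext t
    exact (((hρdiff ((m:ℝ)*t)).hasDerivAt).comp t (hlin m t)).deriv
  have hddσm : ∀ m : ℕ, ∀ t : ℝ,
      deriv (deriv (σm m)) t = deriv (deriv ρ) ((m:ℝ) * t) * (m:ℝ) * (m:ℝ) := by
    intro m t
    rw [hdσm m]
    exact ((((hρ2diff ((m:ℝ)*t)).hasDerivAt).comp t (hlin m t)).mul_const (m:ℝ)).deriv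
  -- rewriting g m
  have hgm : ∀ m : ℕ, g m = fun x => ((m:ℝ)⁻¹^2) * (σm m (ψ x))^2 := by
    intro m; funext x; exact hg m x
  refine ⟨?_, ?_, ?_⟩
  · -- part (i)
    intro y hy
    have hε : (0:ℝ) < -ψ y := by linarith
    obtain ⟨N, hN⟩ := exists_nat_ge (2 / (-ψ y))
    have hU : IsOpen {x : EuclideanSpace ℝ (Fin d) | ψ x < ψ y / 2} :=
      isOpen_lt hψ.continuous continuous_const
    have hyU : y ∈ {x : EuclideanSpace ℝ (Fin d) | ψ x < ψ y / 2} := by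
      simp only [mem_setOf_eq]; linarith
    have key : ∀ m : ℕ, N ≤ m → ∀ x, ψ x < ψ y / 2 → (m:ℝ) * ψ x ≤ -1 := by
      intro m hm x hx
      have hmr : (2 / (-ψ y)) ≤ (m:ℝ) := le_trans hN (by exact_mod_cast hm)
      have h1 : (m:ℝ) * ψ x ≤ (m:ℝ) * (ψ y / 2) := by
        apply mul_le_mul_of_nonneg_left (le_of_lt hx) (by positivity)
      have h2 : (m:ℝ) * (ψ y / 2) ≤ (2 / (-ψ y)) * (ψ y / 2) := by
        apply mul_le_mul_of_nonpos_right hmr (by linarith)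
      have h3 : (2 / (-ψ y)) * (ψ y / 2) = -1 := by
        rw [show (2 / (-ψ y)) * (ψ y / 2) = -(ψ y / ψ y) by ring,
          div_self (ne_of_lt hy)]
      linarith
    have keyval : ∀ m : ℕ, N ≤ m → ∀ x, ψ x < ψ y / 2 → g m x = (m:ℝ)⁻¹^2 := by
      intro m hm x hx
      rw [hg, hρ1 _ (key m hm x hx)]
      ring
    have hgrad0 : ∀ m : ℕ, N ≤ m → ∀ x, ψ x < ψ y / 2 → gradient (g m) x = 0 := by
      intro m hm x hx
      have hconst : g m =ᶠ[nhds x] fun _ => (m:ℝ)⁻¹^2 := by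
        filter_upwards [hU.mem_nhds hx] with z hz
        exact keyval m hm z hz
      have hF : HasFDerivAt (g m) (0 : EuclideanSpace ℝ (Fin d) →L[ℝ] ℝ) x :=
        (hasFDerivAt_const ((m:ℝ)⁻¹^2) x).congr_of_eventuallyEq hconst
      have := hF.hasGradientAt.gradient
      simpa using this
    have hfder0 : ∀ m : ℕ, N ≤ m → fderiv ℝ (gradient (g m)) y = 0 := by
      intro m hm
      have hconst : gradient (g m) =ᶠ[nhds y] fun _ => (0 : EuclideanSpace ℝ (Fin d)) := by
        filter_upwards [hU.mem_nhds hyU] with z hz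
        exact hgrad0 m hm z hz
      rw [hconst.fderiv_eq, fderiv_const_apply]
    refine ⟨?_, ?_, ?_⟩
    · have htt : Tendsto (fun n : ℕ => ((n:ℝ))⁻¹ ^ 2) atTop (nhds 0) := by
        have h := tendsto_inv_atTop_nhds_zero_nat (𝕜 := ℝ)
        have h2 := h.mul h
        rw [mul_zero] at h2
        exact h2.congr fun n => (pow_two _).symm
      refine Tendsto.congr' ?_ htt
      filter_upwards [eventually_atTop.mpr ⟨N, fun m hm => hm⟩] with m hm
      exact (keyval m hm y hyU).symm
    · refine Tendsto.congr' ?_ tendsto_const_nhds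
      filter_upwards [eventually_atTop.mpr ⟨N, fun m hm => hm⟩] with m hm
      exact (hgrad0 m hm y hyU).symm
    · refine Tendsto.congr' ?_ tendsto_const_nhds
      filter_upwards [eventually_atTop.mpr ⟨N, fun m hm => hm⟩] with m hm
      exact (hfder0 m hm).symm
  · -- part (ii)
    intro m hm y hy
    have hm0 : ((m:ℝ)) ≠ 0 := by
      have : (1:ℝ) ≤ (m:ℝ) := by exact_mod_cast hm
      linarith
    have ht : (0:ℝ) ≤ (m:ℝ) * ψ y := mul_nonneg (by positivity) hy
    have hρt : ρ ((m:ℝ) * ψ y) = (m:ℝ) * ψ y := hρ2 _ ht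
    have hσmval : σm m (ψ y) = (m:ℝ) * ψ y := hρt
    have hσmder : deriv (σm m) (ψ y) = (m:ℝ) := by
      simp only [hdσm m]
      rw [hd1' _ ht, one_mul]
    have hσmdd : deriv (deriv (σm m)) (ψ y) = 0 := by
      rw [hddσm m, hd2' _ ht]
      ring
    have e2 : (fun x : EuclideanSpace ℝ (Fin d) => (ψ x)^2)
        = fun x => (1:ℝ) * ((id : ℝ → ℝ) (ψ x))^2 := by
      funext x; simp
    have hidd : deriv (deriv (id : ℝ → ℝ)) = fun _ => 0 := by
      rw [deriv_id']
      funext x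
      simp
    refine ⟨?_, ?_, ?_⟩
    · rw [hg, hρt]
      field_simp
    · rw [hgm m, (gradA ψ hψ (σm m) (hσm m) _ y).gradient, e2,
        (gradA ψ hψ id contDiff_id 1 y).gradient]
      congr 1
      rw [hσmval, hσmder, id_eq, deriv_id]
      field_simp
    · rw [hgm m, gradB ψ hψ (σm m) (hσm m) _ y, e2, gradB ψ hψ id contDiff_id 1 y]
      rw [hσmval, hσmder, hσmdd, hidd, id_eq, deriv_id]
      congr 1
      · congr 1
        field_simp
        try ring
      · congr 1
        field_simp
        try ring
  · -- part (iii)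
    intro K hK
    -- bounds from compactness
    obtain ⟨C0, hC0⟩ := hK.exists_bound_of_continuousOn hψ.continuous.continuousOn
    have hgs : ContDiff ℝ 1 (gradient ψ) := gradContDiff ψ hψ
    obtain ⟨Cg, hCg⟩ := hK.exists_bound_of_continuousOn hgs.continuous.continuousOn
    obtain ⟨Cf, hCf⟩ := hK.exists_bound_of_continuousOn
      ((hψ.continuous_fderiv (by norm_num)).continuousOn)
    obtain ⟨C2, hC2⟩ := hK.exists_bound_of_continuousOn
      ((hgs.continuous_fderiv one_ne_zero).continuousOn)
    obtain ⟨B1', hB1'⟩ := (isCompact_Icc (a := (-1:ℝ)) (b := 0)).exists_bound_of_continuousOn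
      hρc1.continuousOn
    obtain ⟨B2', hB2'⟩ := (isCompact_Icc (a := (-1:ℝ)) (b := 0)).exists_bound_of_continuousOn
      hρc2.continuousOn
    set D1 : ℝ := max B1' 1 with hD1def
    set D2 : ℝ := max B2' 0 with hD2def
    have hD1pos : (0:ℝ) < D1 := lt_of_lt_of_le one_pos (le_max_right _ _)
    have hD2nonneg : (0:ℝ) ≤ D2 := le_max_right _ _
    have hD1 : ∀ t : ℝ, |deriv ρ t| ≤ D1 := by
      intro t
      by_cases h1 : t ≤ -1
      · rw [hd3' t h1, abs_zero]; exact hD1pos.le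
      · by_cases h2 : t ≤ 0
        · have := hB1' t ⟨by linarith, h2⟩
          rw [Real.norm_eq_abs] at this
          exact le_trans this (le_max_left _ _)
        · rw [hd1' t (by linarith), abs_one]
          exact le_max_right _ _
    have hD2 : ∀ t : ℝ, |ρ t * deriv (deriv ρ) t| ≤ D2 := by
      intro t
      by_cases h1 : t ≤ -1
      · rw [hd4' t h1]; simp only [mul_zero, abs_zero]; exact hD2nonneg
      · by_cases h2 : t ≤ 0
        · have hb := hB2' t ⟨by linarith, h2⟩
          rw [Real.norm_eq_abs] at hb
          have hv := hval t h2
          have habs : |ρ t| ≤ 1 := abs_le.mpr ⟨hv.1, by linarith [hv.2]⟩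
          calc |ρ t * deriv (deriv ρ) t| = |ρ t| * |deriv (deriv ρ) t| := abs_mul _ _
            _ ≤ 1 * B2' := mul_le_mul habs hb (abs_nonneg _) one_pos.le
            _ = B2' := one_mul _
            _ ≤ D2 := le_max_left _ _
        · rw [hd2' t (by linarith)]
          simp only [mul_zero, abs_zero]
          exact hD2nonneg
    -- bound on m⁻¹ |ρ (m s)|
    have hrho_bd : ∀ m : ℕ, 1 ≤ m → ∀ s : ℝ, |s| ≤ C0 →
        ((m:ℝ))⁻¹ * |ρ ((m:ℝ) * s)| ≤ max 1 C0 := by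
      intro m hm s hs
      have hm1 : (1:ℝ) ≤ (m:ℝ) := by exact_mod_cast hm
      have hm0 : (0:ℝ) < (m:ℝ) := by linarith
      by_cases h : 0 ≤ s
      · rw [hρ2 _ (mul_nonneg hm0.le h)]
        rw [abs_of_nonneg (mul_nonneg hm0.le h)]
        rw [← mul_assoc, inv_mul_cancel₀ (ne_of_gt hm0), one_mul]
        exact le_trans (le_trans (le_abs_self s) hs) (le_max_right _ _)
      · have hlt : (m:ℝ) * s ≤ 0 := mul_nonpos_of_nonneg_of_nonpos hm0.le (by linarith)
        have hv := hval _ hlt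
        have habs : |ρ ((m:ℝ) * s)| ≤ 1 := abs_le.mpr ⟨hv.1, by linarith [hv.2]⟩
        have hminv : ((m:ℝ))⁻¹ ≤ 1 := by
          rw [inv_le_one_iff₀]; right; exact hm1
        calc ((m:ℝ))⁻¹ * |ρ ((m:ℝ) * s)| ≤ 1 * 1 :=
              mul_le_mul hminv habs (abs_nonneg _) one_pos.le
          _ = 1 := one_mul _
          _ ≤ max 1 C0 := le_max_left _ _
    refine ⟨2 * max 1 C0 * D1 * Cg + (2 * (D1^2 + D2) * (Cf * Cg) + 2 * max 1 C0 * D1 * C2),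
      ?_⟩
    intro m hm y hyK
    have hm1 : (1:ℝ) ≤ (m:ℝ) := by exact_mod_cast hm
    have hm0 : ((m:ℝ)) ≠ 0 := by linarith
    -- pointwise norm bounds
    have hC0y : |ψ y| ≤ C0 := by
      have := hC0 y hyK; rwa [Real.norm_eq_abs] at this
    have hCgy := hCg y hyK
    have hCfy := hCf y hyK
    have hC2y := hC2 y hyK
    have hCgnn : (0:ℝ) ≤ Cg := le_trans (norm_nonneg _) hCgy
    have hCfnn : (0:ℝ) ≤ Cf := le_trans (norm_nonneg _) hCfy
    have hC2nn : (0:ℝ) ≤ C2 := le_trans (norm_nonneg _) hC2y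
    have hmax1 : (0:ℝ) ≤ max 1 C0 := le_trans one_pos.le (le_max_left _ _)
    -- coefficient computations
    have hcoef1 : 2 * ((m:ℝ)⁻¹^2) * σm m (ψ y) * deriv (σm m) (ψ y)
        = 2 * (((m:ℝ))⁻¹ * ρ ((m:ℝ) * ψ y)) * deriv ρ ((m:ℝ) * ψ y) := by
      simp only [hdσm m]
      simp only [hσm_def]
      field_simp
    have hcoef2 : 2 * ((m:ℝ)⁻¹^2) * ((deriv (σm m) (ψ y))^2
          + σm m (ψ y) * deriv (deriv (σm m)) (ψ y))
        = 2 * ((deriv ρ ((m:ℝ) * ψ y))^2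
            + ρ ((m:ℝ) * ψ y) * deriv (deriv ρ) ((m:ℝ) * ψ y)) := by
      rw [hddσm m (ψ y)]
      simp only [hdσm m]
      simp only [hσm_def]
      field_simp
    have hbd1 : |2 * (((m:ℝ))⁻¹ * ρ ((m:ℝ) * ψ y)) * deriv ρ ((m:ℝ) * ψ y)|
        ≤ 2 * max 1 C0 * D1 := by
      have h1 : |((m:ℝ))⁻¹ * ρ ((m:ℝ) * ψ y)| ≤ max 1 C0 := by
        rw [abs_mul, abs_of_nonneg (by positivity : (0:ℝ) ≤ ((m:ℝ))⁻¹)]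
        exact hrho_bd m hm (ψ y) hC0y
      calc |2 * (((m:ℝ))⁻¹ * ρ ((m:ℝ) * ψ y)) * deriv ρ ((m:ℝ) * ψ y)|
          = 2 * |((m:ℝ))⁻¹ * ρ ((m:ℝ) * ψ y)| * |deriv ρ ((m:ℝ) * ψ y)| := by
            rw [abs_mul, abs_mul]; norm_num
        _ ≤ 2 * max 1 C0 * D1 := by
            apply mul_le_mul (by linarith [h1]) (hD1 _) (abs_nonneg _) (by positivity)
    have hbd2 : |2 * ((deriv ρ ((m:ℝ) * ψ y))^2
          + ρ ((m:ℝ) * ψ y) * deriv (deriv ρ) ((m:ℝ) * ψ y))| ≤ 2 * (D1^2 + D2) := by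
      have hp : |(deriv ρ ((m:ℝ) * ψ y))^2| ≤ D1^2 := by
        rw [abs_pow]
        exact pow_le_pow_left₀ (abs_nonneg _) (hD1 _) 2
      have h1 : |(deriv ρ ((m:ℝ) * ψ y))^2
          + ρ ((m:ℝ) * ψ y) * deriv (deriv ρ) ((m:ℝ) * ψ y)| ≤ D1^2 + D2 :=
        le_trans (abs_add_le _ _) (add_le_add hp (hD2 _))
      rw [abs_mul]
      norm_num
      linarith [h1]
    -- the gradient, second derivative and their norms
    have hgrad : gradient (g m) y
        = (2 * ((m:ℝ)⁻¹^2) * σm m (ψ y) * deriv (σm m) (ψ y)) • gradient ψ y := by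
      rw [hgm m]
      exact (gradA ψ hψ (σm m) (hσm m) _ y).gradient
    have hfder : fderiv ℝ (gradient (g m)) y
        = (2 * ((m:ℝ)⁻¹^2) * ((deriv (σm m) (ψ y))^2
            + σm m (ψ y) * deriv (deriv (σm m)) (ψ y)))
              • ((fderiv ℝ ψ y).smulRight (gradient ψ y))
          + (2 * ((m:ℝ)⁻¹^2) * σm m (ψ y) * deriv (σm m) (ψ y))
              • fderiv ℝ (gradient ψ) y := by
      rw [hgm m]
      exact gradB ψ hψ (σm m) (hσm m) _ y
    have hM2nn : (0:ℝ) ≤ 2 * (D1^2 + D2) * (Cf * Cg) + 2 * max 1 C0 * D1 * C2 := by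
      have h1 : (0:ℝ) ≤ 2 * (D1^2 + D2) := by nlinarith [sq_nonneg D1]
      have h2 : (0:ℝ) ≤ 2 * max 1 C0 * D1 := by positivity
      exact add_nonneg (mul_nonneg h1 (mul_nonneg hCfnn hCgnn)) (mul_nonneg h2 hC2nn)
    constructor
    · rw [hgrad, norm_smul, Real.norm_eq_abs, hcoef1]
      have hb := mul_le_mul hbd1 hCgy (norm_nonneg _) (by positivity)
      linarith
    · rw [hfder]
      have hS : ‖(fderiv ℝ ψ y).smulRight (gradient ψ y)‖ ≤ Cf * Cg := by
        rw [ContinuousLinearMap.norm_smulRight_apply]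
        exact mul_le_mul hCfy hCgy (norm_nonneg _) hCfnn
      apply le_trans (norm_add_le _ _)
      rw [norm_smul, norm_smul, Real.norm_eq_abs, Real.norm_eq_abs, hcoef1, hcoef2]
      have t1 := mul_le_mul hbd2 hS (norm_nonneg _)
        (by nlinarith [sq_nonneg D1] : (0:ℝ) ≤ 2 * (D1^2 + D2))
      have t2 := mul_le_mul hbd1 hC2y (norm_nonneg _) (by positivity :
        (0:ℝ) ≤ 2 * max 1 C0 * D1)
      have hM1nn : (0:ℝ) ≤ 2 * max 1 C0 * D1 * Cg := by positivity
      linarith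
end
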